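/- arXiv:1002.2271 — 2 statements merged into one kernel-verified Lean document; each statement's English description precedes it below -/
import Mathlib

section
/- For any a, b > 0 and k, l ≥ 0, there exists a constant C (depending only on a, b, k, l) such that (g_a H_k^{[a]}) ⋆ (g_b H_l^{[b]}) = C · g_{a+b} · H_{k+l}^{[a+b]}. -/
open MeasureTheory Real

/-- Probabilists' Hermite polynomial `H_k(x) = (-1)^k e^{x²/2} (d^k/dx^k) e^{-x²/2}`. -/
noncomputable def hermiteH (k : ℕ) (x : ℝ) : ℝ :=
  (-1 : ℝ) ^ k * Real.exp (x ^ 2 / 2) *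
    iteratedDeriv k (fun y : ℝ => Real.exp (-(y ^ 2) / 2)) x

/-- Centered Gaussian density of variance `p`. -/
noncomputable def gauss (p : ℝ) (x : ℝ) : ℝ :=
  (Real.sqrt (2 * Real.pi * p))⁻¹ * Real.exp (-(x ^ 2) / (2 * p))

/-- Normalized Hermite polynomial adapted to variance `p`:
`H_k^{[p]}(x) = H_k(x/√p)/√(k!)`. -/
noncomputable def hermiteN (p : ℝ) (k : ℕ) (x : ℝ) : ℝ :=
  (Real.sqrt (Nat.factorial k))⁻¹ * hermiteH k (x / Real.sqrt p)

/-!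
Up to the factor `(-√p)^k / √(k!)`, `g_p H_k^{[p]}` is the `k`-th derivative of `g_p`
(Rodrigues' formula for `H_k`). Derivatives of Gaussians are integrable and bounded, so they
can be moved through the convolution:
`g_a^{(k)} ⋆ g_b^{(l)} = (g_a ⋆ g_b)^{(k+l)} = g_{a+b}^{(k+l)}`,
where `g_a ⋆ g_b = g_{a+b}` by completing the square.
-/

open scoped Convolution ContDiff

namespace Polynomial

theorem exists_abs_eval_le_mul_exp_abs (q : ℝ[X]) :
    ∃ C, ∀ y : ℝ, |q.eval y| ≤ C * exp |y| := by
  refine ⟨∑ i ∈ Finset.range (q.natDegree + 1), |q.coeff i| * i.factorial, fun y => ?_⟩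
  rw [eval_eq_sum_range, Finset.sum_mul]
  refine (Finset.abs_sum_le_sum_abs _ _).trans (Finset.sum_le_sum fun i _ => ?_)
  have h := Real.pow_div_factorial_le_exp |y| (abs_nonneg y) i
  rw [div_le_iff₀ (by positivity)] at h
  rw [abs_mul, abs_pow, mul_assoc]
  gcongr
  linarith

theorem exists_abs_eval_mul_exp_le (q : ℝ[X]) :
    ∃ C, ∀ y : ℝ, |q.eval y| * exp (-(y ^ 2 / 2)) ≤ C * exp (-(1 / 4) * y ^ 2) := by
  obtain ⟨C, hC⟩ := q.exists_abs_eval_le_mul_exp_abs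
  refine ⟨C * exp 1, fun y => ?_⟩
  have hsq : |y| - y ^ 2 / 4 ≤ 1 := by nlinarith [sq_nonneg (|y| / 2 - 1), sq_abs y]
  calc |q.eval y| * exp (-(y ^ 2 / 2)) ≤ C * exp |y| * exp (-(y ^ 2 / 2)) := by
        gcongr; exact hC y
    _ = C * exp (|y| - y ^ 2 / 4) * exp (-(1 / 4) * y ^ 2) := by
      rw [mul_assoc, mul_assoc, ← exp_add, ← exp_add]; ring_nf
    _ ≤ C * exp 1 * exp (-(1 / 4) * y ^ 2) := by
      have hC0 : 0 ≤ C := (abs_nonneg _).trans ((hC 0).trans (by simp))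
      gcongr

end Polynomial

local notation "φ" => fun y : ℝ => exp (-(y ^ 2) / 2)

open Polynomial in
theorem exists_abs_iteratedDeriv_gaussian_le (m : ℕ) :
    ∃ C, ∀ y : ℝ, |iteratedDeriv m φ y| ≤ C * exp (-(1 / 4) * y ^ 2) := by
  obtain ⟨C, hC⟩ := ((hermite m).map (Int.castRingHom ℝ)).exists_abs_eval_mul_exp_le
  refine ⟨C, fun y => ?_⟩
  simp_rw [neg_div, iteratedDeriv_eq_iterate, deriv_gaussian_eq_hermite_mul_gaussian, abs_mul,
    abs_pow, abs_neg, abs_one, one_pow, one_mul, abs_of_pos (exp_pos _), aeval_def,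
    eval₂_eq_eval_map]
  exact hC y

theorem gauss_eq_comp_div {p : ℝ} (hp : 0 < p) :
    gauss p = fun x => (√(2 * π * p))⁻¹ * φ (x / √p) := by
  ext x
  beta_reduce
  rw [gauss, div_pow, sq_sqrt hp.le]
  ring_nf

theorem contDiff_gaussian {n : WithTop ℕ∞} : ContDiff ℝ n φ := by fun_prop

theorem contDiff_gauss {n : WithTop ℕ∞} (p : ℝ) : ContDiff ℝ n (gauss p) := by
  unfold gauss; fun_prop

theorem iteratedDeriv_gauss {p : ℝ} (hp : 0 < p) (m : ℕ) (x : ℝ) :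
    iteratedDeriv m (gauss p) x =
      (√(2 * π * p))⁻¹ * ((√p)⁻¹ ^ m * iteratedDeriv m φ (x / √p)) := by
  have h : gauss p = fun x => (√(2 * π * p))⁻¹ * φ ((√p)⁻¹ * x) := by
    simp_rw [gauss_eq_comp_div hp, inv_mul_eq_div]
  rw [h, iteratedDeriv_const_mul_field, iteratedDeriv_comp_const_mul contDiff_gaussian]
  beta_reduce
  rw [inv_mul_eq_div (√p) x]

theorem exists_abs_iteratedDeriv_gauss_le {p : ℝ} (hp : 0 < p) (m : ℕ) :
    ∃ C, ∀ x : ℝ, |iteratedDeriv m (gauss p) x| ≤ C * exp (-(4 * p)⁻¹ * x ^ 2) := by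
  obtain ⟨C, hC⟩ := exists_abs_iteratedDeriv_gaussian_le m
  refine ⟨(√(2 * π * p))⁻¹ * ((√p)⁻¹ ^ m * C), fun x => ?_⟩
  have hexp : -(1 / 4) * (x / √p) ^ 2 = -(4 * p)⁻¹ * x ^ 2 := by
    rw [div_pow, sq_sqrt hp.le]; ring
  rw [iteratedDeriv_gauss hp, abs_mul, abs_mul, abs_pow, abs_inv, abs_inv,
    abs_of_nonneg (sqrt_nonneg _), abs_of_nonneg (sqrt_nonneg _)]
  calc _ ≤ (√(2 * π * p))⁻¹ *
        ((√p)⁻¹ ^ m * (C * exp (-(1 / 4) * (x / √p) ^ 2))) := by gcongr; exact hC _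
    _ = _ := by rw [hexp]; ring

theorem integrable_iteratedDeriv_gauss {p : ℝ} (hp : 0 < p) (m : ℕ) :
    Integrable (iteratedDeriv m (gauss p)) := by
  obtain ⟨C, hC⟩ := exists_abs_iteratedDeriv_gauss_le hp m
  refine ((integrable_exp_neg_mul_sq (by positivity)).const_mul C).mono'
    ((contDiff_gauss p).continuous_iteratedDeriv m le_rfl).aestronglyMeasurable
    (.of_forall hC)

theorem exists_bound_iteratedDeriv_gauss {p : ℝ} (hp : 0 < p) (m : ℕ) :
    ∃ C, ∀ x : ℝ, ‖iteratedDeriv m (gauss p) x‖ ≤ C := by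
  obtain ⟨C, hC⟩ := exists_abs_iteratedDeriv_gauss_le hp m
  refine ⟨C, fun x => (hC x).trans ?_⟩
  have hC0 : 0 ≤ C := (abs_nonneg _).trans ((hC 0).trans (by simp))
  have hexp : exp (-(4 * p)⁻¹ * x ^ 2) ≤ 1 := exp_le_one_iff.2 (by
    have : 0 ≤ (4 * p)⁻¹ * x ^ 2 := by positivity
    linarith)
  exact mul_le_of_le_one_right hC0 hexp

noncomputable def rodriguesCoeff (p : ℝ) (m : ℕ) : ℝ :=
  (√(m.factorial : ℝ))⁻¹ * (-√p) ^ m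

theorem rodriguesCoeff_ne_zero {p : ℝ} (hp : 0 < p) (m : ℕ) : rodriguesCoeff p m ≠ 0 :=
  mul_ne_zero (by positivity) (pow_ne_zero _ (neg_ne_zero.2 (sqrt_pos.2 hp).ne'))

theorem gauss_mul_hermiteN {p : ℝ} (hp : 0 < p) (m : ℕ) :
    (fun x => gauss p x * hermiteN p m x) = rodriguesCoeff p m • iteratedDeriv m (gauss p) := by
  ext x
  set y := x / √p
  have hexp : exp (-(y ^ 2) / 2) * exp (y ^ 2 / 2) = 1 := by rw [← exp_add]; ring_nf; simp
  have hpow : (-√p) ^ m * (√p)⁻¹ ^ m = (-1) ^ m := by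
    rw [← mul_pow, neg_mul, mul_inv_cancel₀ (by positivity)]
  rw [Pi.smul_apply, smul_eq_mul, rodriguesCoeff, iteratedDeriv_gauss hp, hermiteN, hermiteH,
    gauss_eq_comp_div hp]
  linear_combination (√(2 * π * p))⁻¹ * (√(m.factorial : ℝ))⁻¹ * (-1) ^ m *
    iteratedDeriv m φ y * hexp -
    (√(2 * π * p))⁻¹ * (√(m.factorial : ℝ))⁻¹ * iteratedDeriv m φ y * hpow

theorem gauss_mul_gauss_sub {a b : ℝ} (ha : 0 < a) (hb : 0 < b) (x t : ℝ) :
    gauss a t * gauss b (x - t) = gauss (a + b) x *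
      ProbabilityTheory.gaussianPDFReal (a * x / (a + b)) (a * b / (a + b)).toNNReal t := by
  have hsqrt : (√(2 * π * a))⁻¹ * (√(2 * π * b))⁻¹ =
      (√(2 * π * (a + b)))⁻¹ * (√(2 * π * (a * b / (a + b))))⁻¹ := by
    rw [← mul_inv, ← mul_inv, ← sqrt_mul (by positivity), ← sqrt_mul (by positivity)]
    congr 2
    field_simp
  have hexp : -t ^ 2 / (2 * a) + -(x - t) ^ 2 / (2 * b) =
      -x ^ 2 / (2 * (a + b)) + -(t - a * x / (a + b)) ^ 2 / (2 * (a * b / (a + b))) := by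
    field_simp
    ring
  rw [gauss, gauss, gauss, ProbabilityTheory.gaussianPDFReal, Real.coe_toNNReal _ (by positivity),
    mul_mul_mul_comm, hsqrt, ← exp_add, hexp, exp_add]
  ring

theorem gauss_conv_gauss {a b : ℝ} (ha : 0 < a) (hb : 0 < b) :
    gauss a ⋆ gauss b = gauss (a + b) := by
  ext x
  simp_rw [convolution_def, ContinuousLinearMap.lsmul_apply, smul_eq_mul,
    gauss_mul_gauss_sub ha hb]
  rw [integral_const_mul,
    ProbabilityTheory.integral_gaussianPDFReal_eq_one _ (Real.toNNReal_pos.2 (by positivity)).ne',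
    mul_one]

theorem convolution_lsmul_comm (f g : ℝ → ℝ) : f ⋆ g = g ⋆ f := by
  ext x
  rw [convolution_lsmul, convolution_lsmul_swap]
  simp_rw [smul_eq_mul, mul_comm]

theorem hasDerivAt_convolution_right_of_bounded {f g g' : ℝ → ℝ} {C C' : ℝ}
    (hf : Integrable f) (hg : ∀ x, HasDerivAt g (g' x) x) (hg' : Continuous g')
    (hgC : ∀ x, ‖g x‖ ≤ C) (hg'C : ∀ x, ‖g' x‖ ≤ C') (x₀ : ℝ) :
    HasDerivAt (f ⋆ g) ((f ⋆ g') x₀) x₀ := by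
  have hgc : Continuous g := continuous_iff_continuousAt.2 fun x => (hg x).continuousAt
  have hmeas : ∀ {h : ℝ → ℝ}, Continuous h → ∀ x,
      AEStronglyMeasurable (fun t => h (x - t)) :=
    fun hh x => (hh.comp (continuous_sub_left x)).aestronglyMeasurable
  refine (hasDerivAt_integral_of_dominated_loc_of_deriv_le (F := fun x t => f t * g (x - t))
    (F' := fun x t => f t * g' (x - t)) (bound := fun t => ‖f t‖ * C') Filter.univ_mem
    (.of_forall fun x => hf.aestronglyMeasurable.mul (hmeas hgc x))
    (hf.mul_bdd (hmeas hgc x₀) (.of_forall fun t => hgC _))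
    (hf.aestronglyMeasurable.mul (hmeas hg' x₀)) ?_ (hf.norm.mul_const C') ?_).2
  · refine .of_forall fun t x _ => ?_
    rw [norm_mul]
    gcongr
    exact hg'C _
  · exact .of_forall fun t x _ => ((hg (x - t)).comp_sub_const x t).const_mul (f t)

theorem hasDerivAt_iteratedDeriv_gauss (p : ℝ) (m : ℕ) (x : ℝ) :
    HasDerivAt (iteratedDeriv m (gauss p)) (iteratedDeriv (m + 1) (gauss p) x) x := by
  rw [iteratedDeriv_succ]
  exact ((contDiff_gauss p).differentiable_iteratedDeriv' m x).hasDerivAt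

theorem iteratedDeriv_gauss_conv_succ {a b : ℝ} (ha : 0 < a) (hb : 0 < b) {k l : ℕ}
    (h : iteratedDeriv k (gauss a) ⋆ iteratedDeriv l (gauss b) =
      iteratedDeriv (k + l) (gauss (a + b))) :
    iteratedDeriv k (gauss a) ⋆ iteratedDeriv (l + 1) (gauss b) =
      iteratedDeriv (k + l + 1) (gauss (a + b)) := by
  obtain ⟨C, hC⟩ := exists_bound_iteratedDeriv_gauss hb l
  obtain ⟨C', hC'⟩ := exists_bound_iteratedDeriv_gauss hb (l + 1)
  ext x
  refine (hasDerivAt_convolution_right_of_bounded (integrable_iteratedDeriv_gauss ha k)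
    (hasDerivAt_iteratedDeriv_gauss b l) ((contDiff_gauss b).continuous_iteratedDeriv _ le_rfl)
    hC hC' x).unique ?_
  rw [h]
  exact hasDerivAt_iteratedDeriv_gauss (a + b) (k + l) x

theorem gauss_conv_iteratedDeriv_gauss {a b : ℝ} (ha : 0 < a) (hb : 0 < b) (l : ℕ) :
    gauss a ⋆ iteratedDeriv l (gauss b) = iteratedDeriv l (gauss (a + b)) := by
  induction l with
  | zero => simpa using gauss_conv_gauss ha hb
  | succ l ih =>
    simpa using iteratedDeriv_gauss_conv_succ (k := 0) ha hb (by simpa using ih)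

theorem iteratedDeriv_gauss_conv {a b : ℝ} (ha : 0 < a) (hb : 0 < b) (k l : ℕ) :
    iteratedDeriv k (gauss a) ⋆ iteratedDeriv l (gauss b) =
      iteratedDeriv (k + l) (gauss (a + b)) := by
  induction l with
  | zero =>
    rw [iteratedDeriv_zero, convolution_lsmul_comm, gauss_conv_iteratedDeriv_gauss hb ha,
      add_comm b a, add_zero]
  | succ l ih => exact iteratedDeriv_gauss_conv_succ ha hb ih

/-- `(g_a H_k^{[a]}) ⋆ (g_b H_l^{[b]}) = C g_{a+b} H_{k+l}^{[a+b]}` for some constant `C`. -/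
theorem hermite_conv_general (a b : ℝ) (ha : 0 < a) (hb : 0 < b) (k l : ℕ) :
    ∃ C : ℝ, ∀ x : ℝ,
      ∫ t, (gauss a t * hermiteN a k t) * (gauss b (x - t) * hermiteN b l (x - t)) =
        C * (gauss (a + b) x * hermiteN (a + b) (k + l) x) := by
  have hab : 0 < a + b := by linarith
  refine ⟨rodriguesCoeff a k * rodriguesCoeff b l / rodriguesCoeff (a + b) (k + l), fun x => ?_⟩
  change ((fun t => gauss a t * hermiteN a k t) ⋆ fun t => gauss b t * hermiteN b l t) x = _
  rw [gauss_mul_hermiteN ha, gauss_mul_hermiteN hb, smul_convolution, convolution_smul,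
    iteratedDeriv_gauss_conv ha hb, congrFun (gauss_mul_hermiteN hab (k + l)) x]
  simp only [Pi.smul_apply, smul_eq_mul]
  field_simp [rodriguesCoeff_ne_zero hab]
end

section
/- Let p, v > 0, let L be a polynomial with ∫ L g_p = 0 and inf L > −∞, and set f_ε = g_p(1 + εL). Then D(f_ε ⋆ g_v ‖ g_{p+v}) = (ε²/2) · ‖((g_p L) ⋆ g_v)/g_{p+v}‖²_{L²(g_{p+v})} + o(ε²) as ε → 0⁺. -/
open MeasureTheory Real

/-!
Write `r = ((g_p L) ⋆ g_v) / g_{p+v}`. Then `f_ε ⋆ g_v = g_{p+v} (1 + ε r)`, so the divergence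
is `∫ (1 + ε r) log (1 + ε r) d𝓝(0, p + v)`. Completing the square in `g_p(t) g_v(x - t)`
shows that `r(x)` is the mean of `L` under a Gaussian posterior, so `r` inherits the lower
bound and the polynomial growth of `L`, and by Fubini its `𝓝(0, p + v)`-mean is the
`𝓝(0, p)`-mean of `L`, i.e. zero. Finally `(1 + u) log (1 + u) = u + u² / 2 + O(|u|³)`
uniformly on `u ≥ -1/2`, which leaves a remainder of order `ε³ ∫ |r|³`.
-/

open ProbabilityTheory Filter Topology Set
open scoped NNReal

lemma abs_one_add_mul_log_one_add_sub_le {u : ℝ} (hu : -(1 / 2) ≤ u) :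
    |(1 + u) * log (1 + u) - u - u ^ 2 / 2| ≤ 5 * |u| ^ 3 := by
  rcases le_or_gt u (1 / 2) with hu' | hu'
  · have habs : |u| ≤ 1 / 2 := abs_le.2 ⟨hu, hu'⟩
    have hlog : |log (1 + u) - u + u ^ 2 / 2| ≤ 2 * |u| ^ 3 := by
      have h := Real.abs_log_sub_add_sum_range_le (x := -u) (by rw [abs_neg]; linarith) 2
      simp only [Finset.sum_range_succ, Finset.sum_range_zero, abs_neg, sub_neg_eq_add] at h
      refine (le_of_eq_of_le (congrArg _ (by ring)) h).trans ?_
      rw [show 2 + 1 = 3 from rfl, div_le_iff₀ (by linarith)]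
      nlinarith [pow_nonneg (abs_nonneg u) 3]
    have h1u : |1 + u| ≤ 3 / 2 := abs_le.2 ⟨by linarith, by linarith⟩
    calc |(1 + u) * log (1 + u) - u - u ^ 2 / 2|
        = |(1 + u) * (log (1 + u) - u + u ^ 2 / 2) - u ^ 3 / 2| := by ring_nf
      _ ≤ |1 + u| * |log (1 + u) - u + u ^ 2 / 2| + |u| ^ 3 / 2 := by
          refine (abs_sub _ _).trans_eq ?_
          rw [abs_mul, abs_div, abs_pow, abs_two]
      _ ≤ 3 / 2 * (2 * |u| ^ 3) + |u| ^ 3 / 2 := by gcongr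
      _ ≤ 5 * |u| ^ 3 := by nlinarith [pow_nonneg (abs_nonneg u) 3]
  · have hlog_le : log (1 + u) ≤ u := by
      linarith [Real.log_le_sub_one_of_pos (by linarith : 0 < 1 + u)]
    have hlog_nonneg : 0 ≤ log (1 + u) := Real.log_nonneg (by linarith)
    rw [abs_of_pos (by linarith : 0 < u), abs_le]
    constructor <;> nlinarith [mul_le_mul_of_nonneg_left hlog_le (by linarith : (0 : ℝ) ≤ 1 + u),
      mul_nonneg (by linarith : (0 : ℝ) ≤ 1 + u) hlog_nonneg]

section EntropyExpansion

variable {α : Type*} [MeasurableSpace α] {μ : Measure α} {r : α → ℝ}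

lemma abs_integral_mul_log_sub_le {ε : ℝ} (hε : 0 ≤ ε) (hεr : ∀ x, -(1 / 2) ≤ ε * r x)
    (hr1 : Integrable r μ) (hr0 : ∫ x, r x ∂μ = 0) (hr2 : Integrable (fun x => r x ^ 2) μ)
    (hr3 : Integrable (fun x => |r x| ^ 3) μ) :
    |∫ x, (1 + ε * r x) * log (1 + ε * r x) ∂μ - ε ^ 2 / 2 * ∫ x, r x ^ 2 ∂μ|
      ≤ 5 * ε ^ 3 * ∫ x, |r x| ^ 3 ∂μ := by
  set Ψ : α → ℝ := fun x => (1 + ε * r x) * log (1 + ε * r x) - ε * r x - (ε * r x) ^ 2 / 2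
  have hΨ : ∀ x, ‖Ψ x‖ ≤ 5 * ε ^ 3 * |r x| ^ 3 := fun x => by
    simpa [Ψ, abs_mul, mul_pow, abs_of_nonneg hε, mul_assoc] using
      abs_one_add_mul_log_one_add_sub_le (hεr x)
  have hΨint : Integrable Ψ μ := by
    refine (hr3.const_mul (5 * ε ^ 3)).mono' ?_ (ae_of_all _ hΨ)
    have hmeas : AEStronglyMeasurable (fun x => ε * r x) μ :=
      (hr1.const_mul ε).aestronglyMeasurable
    have := Real.continuous_mul_log.comp_aestronglyMeasurable (hmeas.const_add 1)
    fun_prop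
  have hsplit : ∫ x, (1 + ε * r x) * log (1 + ε * r x) ∂μ
      = ∫ x, Ψ x ∂μ + ε * ∫ x, r x ∂μ + ε ^ 2 / 2 * ∫ x, r x ^ 2 ∂μ := by
    have h : ∀ x, (1 + ε * r x) * log (1 + ε * r x) = Ψ x + ε * r x + ε ^ 2 / 2 * r x ^ 2 :=
      fun x => by simp only [Ψ]; ring
    rw [integral_congr_ae (ae_of_all _ h),
      integral_add (f := fun x => Ψ x + ε * r x) (hΨint.add (hr1.const_mul ε))
        (hr2.const_mul _),
      integral_add hΨint (hr1.const_mul ε), integral_const_mul, integral_const_mul]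
  rw [hsplit, hr0, mul_zero, add_zero, add_sub_cancel_right, ← integral_const_mul]
  exact norm_integral_le_of_norm_le (hr3.const_mul _) (ae_of_all _ hΨ)

theorem tendsto_integral_one_add_mul_log_sub_div_sq (hbdd : BddBelow (range r))
    (hr1 : Integrable r μ) (hr0 : ∫ x, r x ∂μ = 0) (hr2 : Integrable (fun x => r x ^ 2) μ)
    (hr3 : Integrable (fun x => |r x| ^ 3) μ) :
    Tendsto (fun ε : ℝ => (∫ x, (1 + ε * r x) * log (1 + ε * r x) ∂μ
        - ε ^ 2 / 2 * ∫ x, r x ^ 2 ∂μ) / ε ^ 2) (𝓝[>] 0) (𝓝 0) := by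
  obtain ⟨m, hm⟩ := hbdd
  set M := max 1 (-m)
  have hM : 0 < M := lt_max_of_lt_left one_pos
  have hrM : ∀ x, -M ≤ r x := fun x => (neg_le.1 (le_max_right _ _)).trans (hm ⟨x, rfl⟩)
  have hsmall : ∀ᶠ ε in 𝓝[>] (0 : ℝ), 0 < ε ∧ ∀ x, -(1 / 2) ≤ ε * r x := by
    filter_upwards [Ioo_mem_nhdsGT (by positivity : (0 : ℝ) < 1 / (2 * M))] with ε ⟨hε, hεM⟩
    have := (lt_div_iff₀ (by positivity)).1 hεM
    exact ⟨hε, fun x => by nlinarith [mul_le_mul_of_nonneg_left (hrM x) hε.le]⟩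
  have hlim : Tendsto (fun ε : ℝ => 5 * ε * ∫ x, |r x| ^ 3 ∂μ) (𝓝[>] 0) (𝓝 0) :=
    (Continuous.tendsto' (by fun_prop) 0 0 (by simp)).mono_left nhdsWithin_le_nhds
  refine squeeze_zero_norm' ?_ hlim
  filter_upwards [hsmall] with ε ⟨hε, hεr⟩
  rw [norm_div, Real.norm_eq_abs, norm_pow, Real.norm_eq_abs, abs_of_pos hε,
    div_le_iff₀ (by positivity)]
  calc _ ≤ 5 * ε ^ 3 * ∫ x, |r x| ^ 3 ∂μ :=
        abs_integral_mul_log_sub_le hε.le hεr hr1 hr0 hr2 hr3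
    _ = _ := by ring

end EntropyExpansion

section Gauss

lemma measurable_gauss (p : ℝ) : Measurable (gauss p) := by
  unfold gauss
  fun_prop

variable {p v : ℝ}

lemma gauss_eq_gaussianPDFReal (hp : 0 ≤ p) : gauss p = gaussianPDFReal 0 p.toNNReal := by
  ext x
  simp [gauss, gaussianPDFReal, Real.coe_toNNReal _ hp]

lemma integral_gauss_mul (hp : 0 < p) (f : ℝ → ℝ) :
    ∫ x, gauss p x * f x = ∫ x, f x ∂gaussianReal 0 p.toNNReal := by
  rw [integral_gaussianReal_eq_integral_smul (by simpa using hp), gauss_eq_gaussianPDFReal hp.le]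
  rfl

lemma gauss_pos (hp : 0 < p) (x : ℝ) : 0 < gauss p x := by
  unfold gauss
  positivity

lemma integrable_gauss (hp : 0 < p) : Integrable (gauss p) := by
  rw [gauss_eq_gaussianPDFReal hp.le]
  exact integrable_gaussianPDFReal _ _

lemma integral_gauss (hp : 0 < p) : ∫ x, gauss p x = 1 := by
  rw [gauss_eq_gaussianPDFReal hp.le]
  exact integral_gaussianPDFReal_eq_one _ (by simpa using hp)

lemma integrable_gauss_mul_iff (hp : 0 < p) {f : ℝ → ℝ} :
    Integrable (fun x => gauss p x * f x) ↔ Integrable f (gaussianReal 0 p.toNNReal) := by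
  rw [gaussianReal_of_var_ne_zero _ (by simpa using hp), integrable_withDensity_iff_integrable_smul'
    (measurable_gaussianPDF _ _) (ae_of_all _ fun _ => gaussianPDF_lt_top),
    gauss_eq_gaussianPDFReal hp.le]
  simp

lemma gauss_mul_gauss_sub_s15 (hp : 0 < p) (hv : 0 < v) (x t : ℝ) :
    gauss p t * gauss v (x - t) = gauss (p + v) x *
      gaussianPDFReal (p / (p + v) * x) (p * v / (p + v)).toNNReal t := by
  have hpv : 0 < p + v := by linarith
  rw [gaussianPDFReal, Real.coe_toNNReal _ (by positivity)]
  unfold gauss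
  rw [mul_mul_mul_comm, mul_mul_mul_comm (√(2 * π * (p + v)))⁻¹, ← mul_inv, ← mul_inv,
    ← Real.sqrt_mul (by positivity), ← Real.sqrt_mul (by positivity), ← Real.exp_add,
    ← Real.exp_add]
  congr 1
  · congr 2
    field_simp
  · congr 1
    field_simp
    ring

/-- The conditional law of `X` given `X + Z = x`, for independent `X ∼ 𝓝(0, p)`, `Z ∼ 𝓝(0, v)`. -/
noncomputable def gaussPosterior (p v x : ℝ) : Measure ℝ :=
  gaussianReal (p / (p + v) * x) (p * v / (p + v)).toNNReal

instance (p v x : ℝ) : IsProbabilityMeasure (gaussPosterior p v x) :=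
  inferInstanceAs (IsProbabilityMeasure (gaussianReal _ _))

lemma integral_gauss_mul_mul_gauss_sub (hp : 0 < p) (hv : 0 < v) (f : ℝ → ℝ) (x : ℝ) :
    ∫ t, gauss p t * f t * gauss v (x - t)
      = gauss (p + v) x * ∫ t, f t ∂gaussPosterior p v x := by
  have hw : (p * v / (p + v)).toNNReal ≠ 0 := by
    simpa using (by positivity : 0 < p * v / (p + v))
  rw [gaussPosterior, integral_gaussianReal_eq_integral_smul hw, ← integral_const_mul]
  congr 1 with t
  rw [mul_right_comm, gauss_mul_gauss_sub_s15 hp hv, smul_eq_mul]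
  ring

end Gauss

lemma Polynomial.abs_eval_le_mul_one_add_abs_pow (P : Polynomial ℝ) (t : ℝ) :
    |P.eval t|
      ≤ (∑ i ∈ Finset.range (P.natDegree + 1), |P.coeff i|) * (1 + |t|) ^ P.natDegree := by
  rw [Polynomial.eval_eq_sum_range, Finset.sum_mul]
  refine (Finset.abs_sum_le_sum_abs _ _).trans (Finset.sum_le_sum fun i hi => ?_)
  rw [abs_mul, abs_pow]
  refine mul_le_mul_of_nonneg_left ?_ (abs_nonneg _)
  exact (pow_le_pow_left₀ (abs_nonneg t) (by linarith) i).trans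
    (pow_le_pow_right₀ (by linarith [abs_nonneg t]) (Nat.lt_succ_iff.1 (Finset.mem_range.1 hi)))

lemma integrable_one_add_abs_pow_gaussianReal (m : ℝ) (v : ℝ≥0) (d : ℕ) :
    Integrable (fun x => (1 + |x|) ^ d) (gaussianReal m v) := by
  have h : (fun x : ℝ => (1 + |x|) ^ d)
      = fun x => ∑ k ∈ Finset.range (d + 1), |x| ^ k * (d.choose k : ℝ) := by
    ext x
    rw [add_comm, add_pow]
    simp
  rw [h]
  refine integrable_finsetSum _ fun k _ => Integrable.mul_const ?_ _
  simpa using (memLp_id_gaussianReal' (μ := m) (v := v) k (by simp)).integrable_norm_pow'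

section PolynomialGrowth

variable {m : ℝ} {v : ℝ≥0} {f : ℝ → ℝ} {C : ℝ} {d : ℕ}

lemma integrable_gaussianReal_of_abs_le (hf : AEStronglyMeasurable f (gaussianReal m v))
    (hb : ∀ x, |f x| ≤ C * (1 + |x|) ^ d) : Integrable f (gaussianReal m v) :=
  ((integrable_one_add_abs_pow_gaussianReal m v d).const_mul C).mono' hf (ae_of_all _ hb)

lemma abs_integral_gaussianReal_le (hb : ∀ x, |f x| ≤ C * (1 + |x|) ^ d) :
    |∫ x, f x ∂gaussianReal m v|
      ≤ C * (∫ s, (1 + |s|) ^ d ∂gaussianReal 0 v) * (1 + |m|) ^ d := by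
  have hC : 0 ≤ C := by simpa using (abs_nonneg _).trans (hb 0)
  have hshift : gaussianReal m v = (gaussianReal 0 v).map (· + m) := by
    rw [gaussianReal_map_add_const, zero_add]
  calc |∫ x, f x ∂gaussianReal m v|
      ≤ ∫ x, C * (1 + |x|) ^ d ∂gaussianReal m v := by
        exact norm_integral_le_of_norm_le
          ((integrable_one_add_abs_pow_gaussianReal m v d).const_mul C)
          (ae_of_all _ fun x => (Real.norm_eq_abs (f x)).trans_le (hb x))
    _ = ∫ s, C * (1 + |s + m|) ^ d ∂gaussianReal 0 v := by
        rw [hshift, integral_map (by fun_prop) (by fun_prop)]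
    _ ≤ ∫ s, C * (1 + |s|) ^ d * (1 + |m|) ^ d ∂gaussianReal 0 v := by
        have hpt : ∀ s, C * (1 + |s + m|) ^ d ≤ C * (1 + |s|) ^ d * (1 + |m|) ^ d := fun s => by
          rw [mul_assoc, ← mul_pow]
          gcongr
          nlinarith [abs_add_le s m, mul_nonneg (abs_nonneg s) (abs_nonneg m)]
        have hint := ((integrable_one_add_abs_pow_gaussianReal 0 v d).const_mul C).mul_const
          ((1 + |m|) ^ d)
        refine integral_mono (hint.mono' (by fun_prop) (ae_of_all _ fun s => ?_)) hint hpt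
        rw [Real.norm_eq_abs, abs_of_nonneg (by positivity)]
        exact hpt s
    _ = C * (∫ s, (1 + |s|) ^ d ∂gaussianReal 0 v) * (1 + |m|) ^ d := by
        rw [integral_mul_const, integral_const_mul]

end PolynomialGrowth

section GaussianChannel

variable {p v : ℝ} {L : ℝ → ℝ}

noncomputable def convRatio (p v : ℝ) (L : ℝ → ℝ) (x : ℝ) : ℝ :=
  (∫ t, gauss p t * L t * gauss v (x - t)) / gauss (p + v) x

lemma convRatio_eq_integral_gaussPosterior (hp : 0 < p) (hv : 0 < v) (x : ℝ) :
    convRatio p v L x = ∫ t, L t ∂gaussPosterior p v x := by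
  rw [convRatio, integral_gauss_mul_mul_gauss_sub hp hv,
    mul_div_cancel_left₀ _ (gauss_pos (by linarith) x).ne']

lemma integral_gauss_mul_one_add_mul_gauss_sub (hp : 0 < p) (hv : 0 < v) {x : ℝ}
    (hL : Integrable L (gaussPosterior p v x)) (ε : ℝ) :
    ∫ t, gauss p t * (1 + ε * L t) * gauss v (x - t)
      = gauss (p + v) x * (1 + ε * convRatio p v L x) := by
  rw [integral_gauss_mul_mul_gauss_sub hp hv, integral_add (integrable_const 1) (hL.const_mul ε),
    integral_const_mul, convRatio_eq_integral_gaussPosterior hp hv]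
  simp

lemma measurable_uncurry_gauss_mul_mul_gauss_sub (hL : Measurable L) :
    Measurable (Function.uncurry fun x t => gauss p t * L t * gauss v (x - t)) := by
  have := measurable_gauss p
  have := measurable_gauss v
  fun_prop

lemma measurable_convRatio (hL : Measurable L) : Measurable (convRatio p v L) :=
  (measurable_uncurry_gauss_mul_mul_gauss_sub hL).stronglyMeasurable.integral_prod_right'
    |>.measurable.div (measurable_gauss _)

variable {C : ℝ} {d : ℕ}

lemma abs_convRatio_le (hp : 0 < p) (hv : 0 < v) (hLC : ∀ t, |L t| ≤ C * (1 + |t|) ^ d)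
    (x : ℝ) :
    |convRatio p v L x|
      ≤ C * (∫ s, (1 + |s|) ^ d ∂gaussianReal 0 (p * v / (p + v)).toNNReal) * (1 + |x|) ^ d := by
  rw [convRatio_eq_integral_gaussPosterior hp hv]
  refine (abs_integral_gaussianReal_le hLC).trans ?_
  have hC : 0 ≤ C := by simpa using (abs_nonneg _).trans (hLC 0)
  have hK : 0 ≤ ∫ s, (1 + |s|) ^ d ∂gaussianReal 0 (p * v / (p + v)).toNNReal :=
    integral_nonneg fun s => by positivity
  gcongr _ * (1 + ?_) ^ d
  rw [abs_mul, abs_of_pos (by positivity : 0 < p / (p + v))]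
  exact mul_le_of_le_one_left (abs_nonneg x) ((div_le_one (by linarith)).2 (by linarith))

lemma bddBelow_range_convRatio (hp : 0 < p) (hv : 0 < v) (hLm : Measurable L)
    (hLC : ∀ t, |L t| ≤ C * (1 + |t|) ^ d) (hbdd : BddBelow (range L)) :
    BddBelow (range (convRatio p v L)) := by
  obtain ⟨m, hm⟩ := hbdd
  refine ⟨m, forall_mem_range.2 fun x => ?_⟩
  rw [convRatio_eq_integral_gaussPosterior hp hv, gaussPosterior]
  simpa using integral_mono (integrable_const m)
    (integrable_gaussianReal_of_abs_le hLm.aestronglyMeasurable hLC) fun t => hm ⟨t, rfl⟩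

lemma integral_convRatio_gaussianReal (hp : 0 < p) (hv : 0 < v) (hLm : Measurable L)
    (hLC : ∀ t, |L t| ≤ C * (1 + |t|) ^ d) :
    ∫ x, convRatio p v L x ∂gaussianReal 0 (p + v).toNNReal
      = ∫ t, L t ∂gaussianReal 0 p.toNNReal := by
  have hpv : 0 < p + v := by linarith
  set F : ℝ → ℝ → ℝ := fun x t => gauss p t * L t * gauss v (x - t)
  have hF : ∀ x, gauss (p + v) x * convRatio p v L x = ∫ t, F x t := fun x =>
    mul_div_cancel₀ _ (gauss_pos hpv x).ne'
  have hFt : ∀ t, ∫ x, F x t = gauss p t * L t := fun t => by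
    rw [integral_const_mul, integral_sub_right_eq_self (gauss v) t, integral_gauss hv, mul_one]
  have hint : Integrable (Function.uncurry F) (volume.prod volume) := by
    rw [integrable_prod_iff' (measurable_uncurry_gauss_mul_mul_gauss_sub hLm).aestronglyMeasurable]
    refine ⟨ae_of_all _ fun t => ((integrable_gauss hv).comp_sub_right t).const_mul
      (gauss p t * L t), ?_⟩
    have hnorm : ∀ t, ∫ x, ‖F x t‖ = ‖gauss p t * L t‖ := fun t => by
      simp only [F, norm_mul, Real.norm_of_nonneg (gauss_pos hv _).le]
      rw [integral_const_mul, integral_sub_right_eq_self (gauss v) t, integral_gauss hv, mul_one]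
    exact ((integrable_gauss_mul_iff hp).2
      (integrable_gaussianReal_of_abs_le hLm.aestronglyMeasurable hLC)).norm.congr
        (ae_of_all _ fun t => (hnorm t).symm)
  calc ∫ x, convRatio p v L x ∂gaussianReal 0 (p + v).toNNReal
      = ∫ x, ∫ t, F x t := by
        rw [← integral_gauss_mul hpv]
        exact integral_congr_ae (ae_of_all _ hF)
    _ = ∫ t, ∫ x, F x t := integral_integral_swap hint
    _ = ∫ t, L t ∂gaussianReal 0 p.toNNReal := by
        rw [← integral_gauss_mul hp]
        exact integral_congr_ae (ae_of_all _ hFt)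

lemma integrable_abs_convRatio_pow (hp : 0 < p) (hv : 0 < v) (hLm : Measurable L)
    (hLC : ∀ t, |L t| ≤ C * (1 + |t|) ^ d) (k : ℕ) :
    Integrable (fun x => |convRatio p v L x| ^ k) (gaussianReal 0 (p + v).toNNReal) := by
  set K := C * ∫ s, (1 + |s|) ^ d ∂gaussianReal 0 (p * v / (p + v)).toNNReal
  refine integrable_gaussianReal_of_abs_le (C := K ^ k) (d := d * k)
    ((measurable_convRatio hLm).abs.pow_const k).aestronglyMeasurable fun x => ?_
  rw [abs_pow, abs_abs, pow_mul, ← mul_pow]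
  exact pow_le_pow_left₀ (abs_nonneg _) (abs_convRatio_le hp hv hLC x) k

lemma integral_conv_mul_log_conv_div (hp : 0 < p) (hv : 0 < v) (hLm : Measurable L)
    (hLC : ∀ t, |L t| ≤ C * (1 + |t|) ^ d) (ε : ℝ) :
    ∫ x, (∫ t, gauss p t * (1 + ε * L t) * gauss v (x - t)) *
        log ((∫ t, gauss p t * (1 + ε * L t) * gauss v (x - t)) / gauss (p + v) x)
      = ∫ x, (1 + ε * convRatio p v L x) * log (1 + ε * convRatio p v L x)
          ∂gaussianReal 0 (p + v).toNNReal := by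
  have hpv : 0 < p + v := by linarith
  rw [← integral_gauss_mul hpv]
  congr 1 with x
  rw [integral_gauss_mul_one_add_mul_gauss_sub hp hv
      (integrable_gaussianReal_of_abs_le hLm.aestronglyMeasurable hLC) ε,
    mul_div_cancel_left₀ _ (gauss_pos hpv x).ne', mul_assoc]

end GaussianChannel

/-- Second-order expansion of the output divergence: with `f_ε = g_p(1+εL)`,
`D(f_ε ⋆ g_v ‖ g_{p+v}) = (ε²/2) ‖((g_p L) ⋆ g_v)/g_{p+v}‖²_{L²(g_{p+v})} + o(ε²)`
as `ε → 0⁺`. -/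
theorem kl_second_order_output (p v : ℝ) (hp : 0 < p) (hv : 0 < v) (L : ℝ → ℝ)
    (hpoly : ∃ P : Polynomial ℝ, ∀ x, L x = P.eval x)
    (hbdd : BddBelow (Set.range L))
    (hmean : ∫ x, L x * gauss p x = 0) :
    Filter.Tendsto
      (fun ε : ℝ =>
        ((∫ x, (∫ t, gauss p t * (1 + ε * L t) * gauss v (x - t)) *
            Real.log ((∫ t, gauss p t * (1 + ε * L t) * gauss v (x - t))
              / gauss (p + v) x))
          - ε ^ 2 / 2 *
            ∫ x, ((∫ t, gauss p t * L t * gauss v (x - t)) / gauss (p + v) x) ^ 2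
              * gauss (p + v) x) / ε ^ 2)
      (nhdsWithin 0 (Set.Ioi 0)) (nhds 0) := by
  obtain ⟨P, hP⟩ := hpoly
  have hLm : Measurable L := by
    rw [funext hP]
    exact P.continuous.measurable
  have hLC : ∀ t, |L t| ≤ _ * (1 + |t|) ^ P.natDegree := fun t =>
    hP t ▸ P.abs_eval_le_mul_one_add_abs_pow t
  have hpv : 0 < p + v := by linarith
  have hmoments := integrable_abs_convRatio_pow hp hv hLm hLC
  have hmean' : ∫ x, convRatio p v L x ∂gaussianReal 0 (p + v).toNNReal = 0 := by
    rw [integral_convRatio_gaussianReal hp hv hLm hLC, ← integral_gauss_mul hp]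
    simpa only [mul_comm] using hmean
  have hsq : ∫ x, convRatio p v L x ^ 2 * gauss (p + v) x
      = ∫ x, convRatio p v L x ^ 2 ∂gaussianReal 0 (p + v).toNNReal := by
    simp only [mul_comm _ (gauss _ _), integral_gauss_mul hpv]
  have hr : Integrable (convRatio p v L) (gaussianReal 0 (p + v).toNNReal) :=
    (integrable_norm_iff (measurable_convRatio hLm).aestronglyMeasurable).1
      (by simpa using hmoments 1)
  refine (tendsto_integral_one_add_mul_log_sub_div_sq
    (bddBelow_range_convRatio hp hv hLm hLC hbdd) hr hmean'
    (by simpa only [sq_abs] using hmoments 2) (hmoments 3)).congr fun ε => ?_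
  rw [integral_conv_mul_log_conv_div hp hv hLm hLC]
  exact congrArg (fun I => (_ - ε ^ 2 / 2 * I) / ε ^ 2) hsq.symm
end
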